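/- One minus the Tanimoto similarity, d(A,B) = 1 − |A∩B|/|A∪B|, is a metric on finite sets (the Jaccard distance): it is nonnegative, symmetric, vanishes exactly on equal sets, and satisfies the triangle inequality d(A,C) ≤ d(A,B) + d(B,C). -/

import Mathlib

/-!
Writing `d(A,B) = |A ∆ B| / |A ∪ B|`, the triangle inequality comes from a common denominator
`|A ∪ B ∪ C|`. Enlarging the denominator of `d(A,B)` and `d(B,C)` to it only decreases them, while
for `d(A,C)` the extra elements `T = B \ (A ∪ C)` are added to numerator and denominator alike,
which does not decrease a fraction `≤ 1`. It remains to see `|A ∆ C| + |T| ≤ |A ∆ B| + |B ∆ C|`,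
which holds because `A ∆ C` and `T` are disjoint and both lie in `A ∆ B ∪ B ∆ C`.
-/

/-- Jaccard distance (one minus Tanimoto similarity), with `d(∅,∅) = 0`. -/
noncomputable def jaccardDist {α : Type*} [DecidableEq α] (A B : Finset α) : ℝ :=
  if A ∪ B = ∅ then 0 else 1 - ((A ∩ B).card : ℝ) / (A ∪ B).card

open Finset
open scoped symmDiff

lemma div_le_add_div_add {𝕜 : Type*} [Field 𝕜] [LinearOrder 𝕜] [IsStrictOrderedRing 𝕜]
    {a b t : 𝕜} (ha : 0 ≤ a) (hab : a ≤ b) (ht : 0 ≤ t) :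
    a / b ≤ (a + t) / (b + t) := by
  rcases (ha.trans hab).eq_or_lt with rfl | hb
  · rw [le_antisymm hab ha, div_zero, zero_add]
    positivity
  rw [div_le_div_iff₀ hb (by linarith)]
  nlinarith

namespace Finset

variable {α : Type*} [DecidableEq α]

theorem card_symmDiff_add_card_inter (A B : Finset α) : #(A ∆ B) + #(A ∩ B) = #(A ∪ B) := by
  rw [symmDiff_eq_sup_sdiff_inf]
  exact card_sdiff_add_card_eq_card inter_subset_union

theorem card_symmDiff_add_card_sdiff_le (A B C : Finset α) :
    #(A ∆ C) + #(B \ (A ∪ C)) ≤ #(A ∆ B) + #(B ∆ C) := by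
  have hdisj : Disjoint (A ∆ C) (B \ (A ∪ C)) :=
    disjoint_sdiff.mono_left symmDiff_subset_union
  rw [← card_union_of_disjoint hdisj]
  refine (card_le_card ?_).trans (card_union_le _ _)
  refine union_subset (symmDiff_triangle A B C) fun x hx => ?_
  simp only [mem_sdiff, mem_union, not_or] at hx
  exact mem_union_left _ (mem_symmDiff.2 (Or.inr ⟨hx.1, hx.2.1⟩))

end Finset

section jaccardDist

variable {α : Type*} [DecidableEq α]

-- Holds also for `A = B = ∅`, since `0 / 0 = 0` in `ℝ`.
theorem jaccardDist_eq_card_symmDiff_div (A B : Finset α) :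
    jaccardDist A B = #(A ∆ B) / #(A ∪ B) := by
  by_cases h : A ∪ B = ∅
  · obtain ⟨rfl, rfl⟩ := union_eq_empty.1 h
    simp [jaccardDist]
  have hpos : (0 : ℝ) < #(A ∪ B) := mod_cast card_pos.2 (nonempty_iff_ne_empty.2 h)
  have hcard : (#(A ∆ B) : ℝ) + #(A ∩ B) = #(A ∪ B) := mod_cast card_symmDiff_add_card_inter A B
  rw [jaccardDist, if_neg h]
  field_simp
  linarith

theorem jaccardDist_nonneg (A B : Finset α) : 0 ≤ jaccardDist A B := by
  rw [jaccardDist_eq_card_symmDiff_div]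
  positivity

theorem jaccardDist_comm (A B : Finset α) : jaccardDist A B = jaccardDist B A := by
  rw [jaccardDist_eq_card_symmDiff_div, jaccardDist_eq_card_symmDiff_div, symmDiff_comm,
    union_comm]

theorem jaccardDist_eq_zero_iff {A B : Finset α} : jaccardDist A B = 0 ↔ A = B := by
  rw [jaccardDist_eq_card_symmDiff_div, div_eq_zero_iff, Nat.cast_eq_zero, Nat.cast_eq_zero,
    card_eq_zero, card_eq_zero, symmDiff_eq_empty, union_eq_empty]
  constructor
  · rintro (h | ⟨rfl, rfl⟩) <;> trivial
  · exact Or.inl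

theorem card_symmDiff_div_le_jaccardDist {A B S : Finset α} (h : A ∪ B ⊆ S) :
    #(A ∆ B) / #S ≤ jaccardDist A B := by
  rw [jaccardDist_eq_card_symmDiff_div]
  rcases (#(A ∪ B)).eq_zero_or_pos with h0 | hpos
  · have : #(A ∆ B) = 0 := Nat.eq_zero_of_le_zero (h0 ▸ card_le_card symmDiff_subset_union)
    simp [this]
  exact div_le_div_of_nonneg_left (by positivity) (mod_cast hpos) (mod_cast card_le_card h)

theorem jaccardDist_triangle (A B C : Finset α) :
    jaccardDist A C ≤ jaccardDist A B + jaccardDist B C := by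
  have hS : #(A ∪ C) + #(B \ (A ∪ C)) = #(A ∪ B ∪ C) := by
    rw [add_comm, card_sdiff_add_card, union_left_comm, union_assoc]
  calc jaccardDist A C = #(A ∆ C) / #(A ∪ C) := jaccardDist_eq_card_symmDiff_div A C
    _ ≤ (#(A ∆ C) + #(B \ (A ∪ C))) / (#(A ∪ C) + #(B \ (A ∪ C))) :=
        div_le_add_div_add (by positivity) (mod_cast card_le_card symmDiff_subset_union)
          (by positivity)
    _ = (#(A ∆ C) + #(B \ (A ∪ C))) / #(A ∪ B ∪ C) := by rw [← hS, Nat.cast_add]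
    _ ≤ (#(A ∆ B) + #(B ∆ C)) / #(A ∪ B ∪ C) :=
        div_le_div_of_nonneg_right (mod_cast card_symmDiff_add_card_sdiff_le A B C) (by positivity)
    _ = #(A ∆ B) / #(A ∪ B ∪ C) + #(B ∆ C) / #(A ∪ B ∪ C) := add_div _ _ _
    _ ≤ jaccardDist A B + jaccardDist B C :=
        add_le_add (card_symmDiff_div_le_jaccardDist subset_union_left)
          (card_symmDiff_div_le_jaccardDist (union_assoc A B C ▸ subset_union_right))

end jaccardDist

/-- The Jaccard distance is a metric on finite sets: nonnegative, symmetric, vanishing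
exactly on equal sets, and satisfying the triangle inequality. -/
theorem stmt13 {α : Type*} [DecidableEq α] (A B C : Finset α) :
    0 ≤ jaccardDist A B ∧
      jaccardDist A B = jaccardDist B A ∧
      (jaccardDist A B = 0 ↔ A = B) ∧
      jaccardDist A C ≤ jaccardDist A B + jaccardDist B C :=
  ⟨jaccardDist_nonneg A B, jaccardDist_comm A B, jaccardDist_eq_zero_iff,
    jaccardDist_triangle A B C⟩
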